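/- arXiv:2108.11074 — 3 statements merged into one kernel-verified Lean document; each statement's English description precedes it below -/
import Mathlib

section
/- For real numbers 0 < q ≤ r and every a > 0, the CDF of the chi-squared distribution with r degrees of freedom at a is at most the CDF of the chi-squared distribution with q degrees of freedom at a; equivalently, the regularized lower incomplete gamma function P_G(s, a) is nonincreasing in the shape parameter s > 0 for each fixed a > 0. -/
open MeasureTheory Filter Finset
open scoped BigOperators Topology ENNReal NNReal Classical

namespace DIG

/-- Extended-real logarithm: `⊥` on nonpositive reals, so that the log-likelihood of an
impossible observation is `-∞`. -/
noncomputable def elog (x : ℝ) : EReal := if x ≤ 0 then (⊥ : EReal) else ((Real.log x : ℝ) : EReal)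

/-- A block of length `L` over the alphabet `𝒳`. -/
abbrev Blk (𝒳 : Type*) (L : ℕ) : Type _ := Fin L → 𝒳

/-- A joint history of the three processes: three `k`-blocks. -/
abbrev Hist (𝒳 : Type*) (k : ℕ) : Type _ := Blk 𝒳 k × Blk 𝒳 k × Blk 𝒳 k

/-- A joint symbol of the three processes. -/
abbrev Sym (𝒳 : Type*) : Type _ := 𝒳 × 𝒳 × 𝒳

variable {𝒳 : Type*} [Fintype 𝒳] [DecidableEq 𝒳] [Nonempty 𝒳]
variable {Ω : Type*} [MeasurableSpace Ω]

/-- The real-valued measure of a set. -/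
noncomputable def mreal (μ : MeasureTheory.Measure Ω) (s : Set Ω) : ℝ := (μ s).toReal

/-- Kullback-Leibler divergence between two pmfs on a finite set (with the usual
`0 log 0 = 0` convention, automatic since `0 * x = 0`). -/
noncomputable def KLfin {S : Type*} [Fintype S] (p q : S → ℝ) : ℝ :=
  ∑ s, p s * Real.log (p s / q s)

/-- Shannon entropy of a pmf on a finite set. -/
noncomputable def Hent {S : Type*} [Fintype S] (p : S → ℝ) : ℝ :=
  -∑ s, p s * Real.log (p s)

/-- Pushforward (marginal) of a pmf along a map of finite sets. -/
noncomputable def pushf {S T : Type*} [Fintype S] [DecidableEq T] (g : S → T) (p : S → ℝ) :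
    T → ℝ := fun t => ∑ s, if g s = t then p s else 0

/-! ### Marginals of a joint distribution of `(k+1)`-blocks of three processes -/

/-- Marginal of `(Y₁ᵏ, Z₁ᵏ⁺¹)`. -/
noncomputable def margYkZ {k : ℕ} (p : Blk 𝒳 (k+1) → Blk 𝒳 (k+1) → Blk 𝒳 (k+1) → ℝ)
    (β : Blk 𝒳 k) (c : Blk 𝒳 (k+1)) : ℝ :=
  ∑ a : Blk 𝒳 (k+1), ∑ yl : 𝒳, p a (Fin.snoc β yl) c

/-- Marginal of `(Y₁ᵏ⁺¹, Z₁ᵏ⁺¹)`. -/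
noncomputable def margYZ {k : ℕ} (p : Blk 𝒳 (k+1) → Blk 𝒳 (k+1) → Blk 𝒳 (k+1) → ℝ)
    (b c : Blk 𝒳 (k+1)) : ℝ :=
  ∑ a : Blk 𝒳 (k+1), p a b c

/-- Marginal of `(X₁ᵏ⁺¹, Y₁ᵏ, Z₁ᵏ⁺¹)`. -/
noncomputable def margXYkZ {k : ℕ} (p : Blk 𝒳 (k+1) → Blk 𝒳 (k+1) → Blk 𝒳 (k+1) → ℝ)
    (a : Blk 𝒳 (k+1)) (β : Blk 𝒳 k) (c : Blk 𝒳 (k+1)) : ℝ :=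
  ∑ yl : 𝒳, p a (Fin.snoc β yl) c

/-- Marginal of `(X₁ᵏ, Y₁ᵏ, Z₁ᵏ)` (the first `k` coordinates of each block). -/
noncomputable def margK {k : ℕ} (p : Blk 𝒳 (k+1) → Blk 𝒳 (k+1) → Blk 𝒳 (k+1) → ℝ)
    (α β γ : Blk 𝒳 k) : ℝ :=
  ∑ xl : 𝒳, ∑ yl : 𝒳, ∑ zl : 𝒳, p (Fin.snoc α xl) (Fin.snoc β yl) (Fin.snoc γ zl)

/-- Conditional mutual information `I(Y_{k+1}; X₁ᵏ⁺¹ | Y₁ᵏ, Z₁ᵏ⁺¹)` computed under the joint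
pmf `p` of the three `(k+1)`-blocks. -/
noncomputable def condMI {k : ℕ} (p : Blk 𝒳 (k+1) → Blk 𝒳 (k+1) → Blk 𝒳 (k+1) → ℝ) : ℝ :=
  ∑ a : Blk 𝒳 (k+1), ∑ b : Blk 𝒳 (k+1), ∑ c : Blk 𝒳 (k+1),
    p a b c * Real.log ((p a b c * margYkZ p (Fin.init b) c) /
      (margYZ p b c * margXYkZ p a (Fin.init b) c))

/-! ### Transition matrices and factorization (absence of the edge `X → Y`) -/

/-- `Q` is a transition probability matrix for the joint `k`-th order Markov process. -/
def IsTransMat {k : ℕ} (Q : Hist 𝒳 k → Sym 𝒳 → ℝ) : Prop :=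
  (∀ h s, 0 ≤ Q h s) ∧ (∀ h, ∑ s : Sym 𝒳, Q h s = 1)

/-- The factorization of the transition matrix expressing the absence of the edge `X → Y`:
`Q(x',y',z' | hx,hy,hz) = Q1(x',z' | hx,hy,hz) · Q2(y' | hy, (hz,z'))`. -/
def IsFactorized {k : ℕ} (Q : Hist 𝒳 k → Sym 𝒳 → ℝ) : Prop :=
  ∃ (Q1 : Hist 𝒳 k → 𝒳 × 𝒳 → ℝ) (Q2 : Blk 𝒳 k × Blk 𝒳 (k+1) → 𝒳 → ℝ),
    (∀ h p, 0 ≤ Q1 h p) ∧ (∀ h, ∑ p : 𝒳 × 𝒳, Q1 h p = 1) ∧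
    (∀ h y, 0 ≤ Q2 h y) ∧ (∀ h, ∑ y : 𝒳, Q2 h y = 1) ∧
    (∀ (hx hy hz : Blk 𝒳 k) (x' y' z' : 𝒳),
      Q (hx, hy, hz) (x', y', z') = Q1 (hx, hy, hz) (x', z') * Q2 (hy, Fin.snoc hz z') y')

/-! ### The process, stationarity, Markov property, Assumption 3 -/

/-- The event that the length-`L` blocks of the three processes starting at time `t`
equal `(a, b, c)`. -/
def blockEvent (X Y Z : ℕ → Ω → 𝒳) (t L : ℕ) (a b c : Blk 𝒳 L) : Set Ω :=
  {ω | ∀ i : Fin L, X (t + i) ω = a i ∧ Y (t + i) ω = b i ∧ Z (t + i) ω = c i}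

/-- Joint stationarity of the three processes. -/
def Stationary (μ : MeasureTheory.Measure Ω) (X Y Z : ℕ → Ω → 𝒳) : Prop :=
  ∀ (t L : ℕ) (a b c : Blk 𝒳 L),
    μ (blockEvent X Y Z t L a b c) = μ (blockEvent X Y Z 0 L a b c)

/-- The joint process is Markov of order `k` with transition matrix `Q`: conditionally on the
entire past, the next joint symbol is distributed according to `Q` applied to the last
`k`-block of the past. -/
def MarkovOfOrder (μ : MeasureTheory.Measure Ω) (X Y Z : ℕ → Ω → 𝒳) (k : ℕ)
    (Q : Hist 𝒳 k → Sym 𝒳 → ℝ) : Prop :=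
  ∀ (j : ℕ) (pa pb pc : Blk 𝒳 j) (a b c : Blk 𝒳 k) (s : Sym 𝒳),
    mreal μ (blockEvent X Y Z 0 j pa pb pc ∩ blockEvent X Y Z j k a b c ∩
        {ω | X (j + k) ω = s.1 ∧ Y (j + k) ω = s.2.1 ∧ Z (j + k) ω = s.2.2})
      = Q (a, b, c) s *
        mreal μ (blockEvent X Y Z 0 j pa pb pc ∩ blockEvent X Y Z j k a b c)

/-- Assumption 3: `Y_{k+1}` is conditionally independent of the past `(Y₋∞⁰, Z₋∞⁰)` given
`(Y₁ᵏ, Z₁ᵏ⁺¹)` (stated at every time shift `j`, which by stationarity is the one-sided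
form of the two-sided statement). -/
def CondIndepPast (μ : MeasureTheory.Measure Ω) (X Y Z : ℕ → Ω → 𝒳) (k : ℕ) : Prop :=
  ∀ (j : ℕ) (py pz : Blk 𝒳 j) (b : Blk 𝒳 k) (c : Blk 𝒳 (k+1)) (y : 𝒳),
    mreal μ ({ω | Y (j + k) ω = y} ∩
        {ω | (∀ i : Fin k, Y (j + i) ω = b i) ∧ (∀ i : Fin (k+1), Z (j + i) ω = c i)} ∩
        {ω | ∀ i : Fin j, Y i ω = py i ∧ Z i ω = pz i}) *
      mreal μ {ω | (∀ i : Fin k, Y (j + i) ω = b i) ∧ (∀ i : Fin (k+1), Z (j + i) ω = c i)}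
    = mreal μ ({ω | Y (j + k) ω = y} ∩
        {ω | (∀ i : Fin k, Y (j + i) ω = b i) ∧ (∀ i : Fin (k+1), Z (j + i) ω = c i)}) *
      mreal μ ({ω | (∀ i : Fin k, Y (j + i) ω = b i) ∧ (∀ i : Fin (k+1), Z (j + i) ω = c i)} ∩
        {ω | ∀ i : Fin j, Y i ω = py i ∧ Z i ω = pz i})

/-- Measurability of the elementary events of the process. -/
def MeasProc (X Y Z : ℕ → Ω → 𝒳) : Prop :=
  ∀ (i : ℕ) (x : 𝒳), MeasurableSet {ω | X i ω = x} ∧ MeasurableSet {ω | Y i ω = x} ∧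
    MeasurableSet {ω | Z i ω = x}

/-! ### Empirical distribution, plug-in directed information, log-likelihoods -/

/-- Empirical distribution of `(k+1)`-blocks of three sample sequences of length `n`. -/
noncomputable def empDistSeq (x y z : ℕ → 𝒳) (k n : ℕ) (a b c : Blk 𝒳 (k+1)) : ℝ :=
  ((n - k : ℕ) : ℝ)⁻¹ * ∑ t ∈ Finset.range (n - k),
    if ∀ i : Fin (k+1), x (t + i) = a i ∧ y (t + i) = b i ∧ z (t + i) = c i then 1 else 0

/-- Empirical distribution of `(k+1)`-blocks of the three processes (random). -/
noncomputable def empDist (X Y Z : ℕ → Ω → 𝒳) (k n : ℕ) (a b c : Blk 𝒳 (k+1)) (ω : Ω) : ℝ :=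
  empDistSeq (fun i => X i ω) (fun i => Y i ω) (fun i => Z i ω) k n a b c

/-- The stationary `(k+1)`-block distribution `P̄`. -/
noncomputable def statDist (μ : MeasureTheory.Measure Ω) (X Y Z : ℕ → Ω → 𝒳) (k : ℕ)
    (a b c : Blk 𝒳 (k+1)) : ℝ :=
  mreal μ (blockEvent X Y Z 0 (k+1) a b c)

/-- Plug-in estimator of the directed information:
`Î_n^{(k)}(X→Y‖Z) = I(Ŷ_{k+1}; X̂₁ᵏ⁺¹ | Ŷ₁ᵏ, Ẑ₁ᵏ⁺¹)` under the empirical distribution. -/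
noncomputable def empMI (X Y Z : ℕ → Ω → 𝒳) (k n : ℕ) (ω : Ω) : ℝ :=
  condMI (fun a b c => empDist X Y Z k n a b c ω)

/-- Log-likelihood (extended-real valued) of the samples under transition matrix `Q`. -/
noncomputable def loglikSeq {k : ℕ} (Q : Hist 𝒳 k → Sym 𝒳 → ℝ) (x y z : ℕ → 𝒳) (n : ℕ) :
    EReal :=
  ∑ i ∈ Finset.Ico k n,
    elog (Q (fun j : Fin k => x (i - k + j), fun j : Fin k => y (i - k + j),
      fun j : Fin k => z (i - k + j)) (x i, y i, z i))

/-- Log-likelihood of the process samples under transition matrix `Q`. -/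
noncomputable def loglik {k : ℕ} (Q : Hist 𝒳 k → Sym 𝒳 → ℝ) (X Y Z : ℕ → Ω → 𝒳) (n : ℕ)
    (ω : Ω) : EReal :=
  loglikSeq Q (fun i => X i ω) (fun i => Y i ω) (fun i => Z i ω) n

/-- The Neyman–Pearson log-likelihood ratio `Λ_{xy,n}`: the maximal log-likelihood over all
transition matrices minus the maximal log-likelihood over the factorized (null-hypothesis)
transition matrices. -/
noncomputable def Lambda (X Y Z : ℕ → Ω → 𝒳) (k n : ℕ) (ω : Ω) : EReal :=
  sSup {L : EReal | ∃ Q : Hist 𝒳 k → Sym 𝒳 → ℝ, IsTransMat Q ∧ L = loglik Q X Y Z n ω} -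
  sSup {L : EReal | ∃ Q : Hist 𝒳 k → Sym 𝒳 → ℝ, IsTransMat Q ∧ IsFactorized Q ∧
    L = loglik Q X Y Z n ω}

/-! ### Chi-squared distribution and convergence in distribution -/

/-- The chi-squared distribution with `f` degrees of freedom: the Gamma distribution with
shape `f/2` and rate `1/2`. -/
noncomputable def chiSq (f : ℝ) : MeasureTheory.Measure ℝ :=
  ProbabilityTheory.gammaMeasure (f / 2) (1 / 2)

/-- `W n` converges in distribution (weakly) to `ν` as `n → ∞`. -/
def TendstoInDist (μ : MeasureTheory.Measure Ω) (W : ℕ → Ω → ℝ)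
    (ν : MeasureTheory.Measure ℝ) : Prop :=
  ∀ f : BoundedContinuousFunction ℝ ℝ,
    Tendsto (fun n => ∫ ω, f (W n ω) ∂μ) atTop (𝓝 (∫ x, f x ∂ν))

/-- Conditional mutual information `I(U; V | W)` of finitely-valued random variables. -/
noncomputable def cmiRV {A B C : Type*} [Fintype A] [Fintype B] [Fintype C]
    [DecidableEq A] [DecidableEq B] [DecidableEq C]
    (μ : MeasureTheory.Measure Ω) (U : Ω → A) (V : Ω → B) (W : Ω → C) : ℝ :=
  ∑ a : A, ∑ b : B, ∑ c : C,
    mreal μ {ω | U ω = a ∧ V ω = b ∧ W ω = c} *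
      Real.log ((mreal μ {ω | U ω = a ∧ V ω = b ∧ W ω = c} * mreal μ {ω | W ω = c}) /
        (mreal μ {ω | U ω = a ∧ W ω = c} * mreal μ {ω | V ω = b ∧ W ω = c}))

end DIG

/-!
The ratio of the Gamma(`t`, `ρ`) density to the Gamma(`s`, `ρ`) density is a positive constant
times `x ^ (t - s)`, a nondecreasing function of `x` when `s ≤ t` (monotone likelihood ratio).
If this ratio is at most `1` at `a`, the larger-shape density lies below the other one on
`(-∞, a]`; otherwise it lies above it on `(a, ∞)`, and since both are probability densities the
complements give the same inequality between the CDFs at `a`. The chi-squared distribution with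
`f` degrees of freedom is Gamma(`f / 2`, `1 / 2`).
-/

open ProbabilityTheory Real Set

section MonotoneLikelihoodRatio

variable {α : Type*} [MeasurableSpace α] [TopologicalSpace α] [LinearOrder α]
  [OrderClosedTopology α] [OpensMeasurableSpace α] {μ : Measure α}

theorem withDensity_Iic_le_of_ae_eq_monotone_mul {f g h : α → ℝ≥0∞}
    [IsProbabilityMeasure (μ.withDensity f)] [IsProbabilityMeasure (μ.withDensity g)]
    (hh : Monotone h) (hgf : g =ᵐ[μ] h * f) (a : α) :
    μ.withDensity g (Iic a) ≤ μ.withDensity f (Iic a) := by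
  rcases le_or_gt (h a) 1 with ha | ha
  · rw [withDensity_apply _ measurableSet_Iic, withDensity_apply _ measurableSet_Iic]
    refine setLIntegral_mono_ae' measurableSet_Iic ?_
    filter_upwards [hgf] with x hx hxa
    calc g x = h x * f x := hx
      _ ≤ 1 * f x := by gcongr; exact (hh hxa).trans ha
      _ = f x := one_mul _
  · have hIoi : μ.withDensity f (Ioi a) ≤ μ.withDensity g (Ioi a) := by
      rw [withDensity_apply _ measurableSet_Ioi, withDensity_apply _ measurableSet_Ioi]
      refine setLIntegral_mono_ae' measurableSet_Ioi ?_
      filter_upwards [hgf] with x hx hxa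
      calc f x = 1 * f x := (one_mul _).symm
        _ ≤ h x * f x := by gcongr; exact ha.le.trans (hh hxa.le)
        _ = g x := hx.symm
    rw [← compl_Ioi, prob_compl_eq_one_sub measurableSet_Ioi,
      prob_compl_eq_one_sub measurableSet_Ioi]
    exact tsub_le_tsub_left hIoi 1

end MonotoneLikelihoodRatio

section GammaShape

variable {s t ρ : ℝ}

theorem gammaPDFReal_eq_mul_rpow_mul (hs : 0 < s) (hρ : 0 < ρ) {x : ℝ} (hx : 0 < x) :
    gammaPDFReal t ρ x = ρ ^ (t - s) * Gamma s / Gamma t * x ^ (t - s) * gammaPDFReal s ρ x := by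
  have hΓ : Gamma s ≠ 0 := (Gamma_pos_of_pos hs).ne'
  have hρt : ρ ^ t = ρ ^ (t - s) * ρ ^ s := by rw [← rpow_add hρ, sub_add_cancel]
  have hxt : x ^ (t - 1) = x ^ (t - s) * x ^ (s - 1) := by
    rw [← rpow_add hx, sub_add_sub_cancel]
  rw [gammaPDFReal, gammaPDFReal, if_pos hx.le, if_pos hx.le, hρt, hxt]
  field_simp

theorem gammaPDF_ae_eq_mul (hs : 0 < s) (ht : 0 < t) (hρ : 0 < ρ) :
    gammaPDF t ρ =ᵐ[volume]
      (fun x ↦ ENNReal.ofReal (ρ ^ (t - s) * Gamma s / Gamma t * max x 0 ^ (t - s))) *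
        gammaPDF s ρ := by
  filter_upwards [volume.ae_ne 0] with x hx
  rcases hx.lt_or_gt with hneg | hpos
  · simp [gammaPDF_of_neg hneg]
  · have hC : 0 ≤ ρ ^ (t - s) * Gamma s / Gamma t * max x 0 ^ (t - s) := by
      have := Gamma_pos_of_pos hs
      have := Gamma_pos_of_pos ht
      positivity
    rw [Pi.mul_apply, gammaPDF, gammaPDF, ← ENNReal.ofReal_mul hC, max_eq_left hpos.le,
      gammaPDFReal_eq_mul_rpow_mul hs hρ hpos]

theorem antitoneOn_gammaMeasure_Iic (hρ : 0 < ρ) (a : ℝ) :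
    AntitoneOn (fun s ↦ gammaMeasure s ρ (Iic a)) (Ioi 0) := by
  intro s hs t ht hst
  have : IsProbabilityMeasure (volume.withDensity (gammaPDF s ρ)) :=
    isProbabilityMeasure_gammaMeasure hs hρ
  have : IsProbabilityMeasure (volume.withDensity (gammaPDF t ρ)) :=
    isProbabilityMeasure_gammaMeasure ht hρ
  refine withDensity_Iic_le_of_ae_eq_monotone_mul (fun x y hxy ↦ ?_)
    (gammaPDF_ae_eq_mul hs ht hρ) a
  have := Gamma_pos_of_pos hs
  have := Gamma_pos_of_pos ht
  gcongr

theorem gammaMeasure_Iic_toReal_le (hρ : 0 < ρ) (hs : 0 < s) (hst : s ≤ t) (a : ℝ) :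
    (gammaMeasure t ρ (Iic a)).toReal ≤ (gammaMeasure s ρ (Iic a)).toReal := by
  have := isProbabilityMeasure_gammaMeasure hs hρ
  exact ENNReal.toReal_mono (measure_ne_top _ _)
    (antitoneOn_gammaMeasure_Iic hρ a hs (hs.trans_le hst) hst)

end GammaShape

namespace DIG

/-- For `0 < q ≤ r` and `a > 0`, the CDF of the chi-squared distribution
with `r` degrees of freedom at `a` is at most the CDF of the chi-squared distribution with
`q` degrees of freedom at `a`; equivalently, the regularized lower incomplete gamma
function `P_G(s, a)` (the Gamma CDF with rate 1) is nonincreasing in the shape `s > 0`. -/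
theorem chiSq_cdf_antitone_in_dof :
    (∀ q r a : ℝ, 0 < q → q ≤ r → 0 < a →
      (chiSq r (Set.Iic a)).toReal ≤ (chiSq q (Set.Iic a)).toReal) ∧
    (∀ s₁ s₂ a : ℝ, 0 < s₁ → s₁ ≤ s₂ → 0 < a →
      (ProbabilityTheory.gammaMeasure s₂ 1 (Set.Iic a)).toReal ≤
        (ProbabilityTheory.gammaMeasure s₁ 1 (Set.Iic a)).toReal) :=
  ⟨fun _ _ a hq hqr _ ↦ gammaMeasure_Iic_toReal_le (by norm_num) (by positivity) (by linarith) a,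
    fun _ _ a h₁ h₁₂ _ ↦ gammaMeasure_Iic_toReal_le one_pos h₁ h₁₂ a⟩

end DIG
end

section
/- For any observed samples (x_1^n, y_1^n, z_1^n) with n > k over a finite alphabet 𝒳, the maximum over all factorized transition probability matrices Q_φ = Q1(X_{k+1},Z_{k+1}|X_1^k,Y_1^k,Z_1^k)·Q2(Y_{k+1}|Y_1^k,Z_1^{k+1}) of the log-likelihood L_n^φ is attained and equals (n−k)·[Ĥ(X_1^k,Y_1^k,Z_1^k) − Ĥ(X_1^{k+1},Y_1^k,Z_1^{k+1}) + Ĥ(Y_1^k,Z_1^{k+1}) − Ĥ(Y_1^{k+1},Z_1^{k+1})], where Ĥ denotes the Shannon entropy of the corresponding marginal of the empirical (k+1)-block distribution P̂^{(n)}. -/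
open MeasureTheory Filter Finset
open scoped BigOperators Topology ENNReal NNReal Classical

/-! The log-likelihood of `Q = Q1 · Q2` splits into a log-likelihood of `Q1` on the observed
transitions `(X₁ᵏ, Y₁ᵏ, Z₁ᵏ) → (X_{k+1}, Z_{k+1})` plus one of `Q2` on the observed transitions
`(Y₁ᵏ, Z₁ᵏ⁺¹) → Y_{k+1}`, and the two factors range independently over stochastic matrices, so the
maximum is the sum of two unconstrained maxima. For a stochastic matrix fitted to transition
counts `c(s, v)` with row sums `r(s)`, Gibbs' inequality shows that the maximum is
`∑ c log (c / r)`, attained at the empirical conditional frequencies `c / r`. Writing the counts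
as `(n - k)` times marginals of the empirical block distribution, each maximum becomes `(n - k)`
times a negative conditional entropy `H(context) - H(context, next symbol)`. -/

open scoped Pointwise

theorem IsGreatest.add {M : Type*} [Add M] [Preorder M] [AddLeftMono M] [AddRightMono M]
    {s t : Set M} {a b : M} (ha : IsGreatest s a) (hb : IsGreatest t b) :
    IsGreatest (s + t) (a + b) :=
  ⟨Set.add_mem_add ha.1 hb.1, add_mem_upperBounds_add ha.2 hb.2⟩

theorem EReal.coe_finset_sum {ι : Type*} (s : Finset ι) (f : ι → ℝ) :
    ((∑ i ∈ s, f i : ℝ) : EReal) = ∑ i ∈ s, (f i : EReal) :=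
  map_sum (⟨⟨Real.toEReal, EReal.coe_zero⟩, EReal.coe_add⟩ : ℝ →+ EReal) f s

namespace DIG

open Real

section LogSums

variable {T : Type*} [Fintype T]

theorem mul_log_sub_mul_log_div_le {c q r : ℝ} (hc : 0 ≤ c) (hq : 0 ≤ q) (hr : 0 < r)
    (hpos : 0 < c → 0 < q) : c * log q - c * log (c / r) ≤ q * r - c := by
  rcases hc.eq_or_lt with rfl | hc
  · simpa using mul_nonneg hq hr.le
  have hq := hpos hc
  calc c * log q - c * log (c / r) = c * log (q / (c / r)) := by
        rw [log_div hq.ne' (by positivity)]; ring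
    _ ≤ c * (q / (c / r) - 1) := by gcongr; exact log_le_sub_one_of_pos (by positivity)
    _ = q * r - c := by field_simp

theorem sum_mul_log_le_sum_mul_log_div_sum {c q : T → ℝ} (hc : ∀ b, 0 ≤ c b)
    (hq : ∀ b, 0 ≤ q b) (hq1 : ∑ b, q b ≤ 1) (hpos : ∀ b, 0 < c b → 0 < q b) :
    ∑ b, c b * log (q b) ≤ ∑ b, c b * log (c b / ∑ b', c b') := by
  set r := ∑ b', c b'
  rcases (sum_nonneg fun b _ => hc b : 0 ≤ r).eq_or_lt with hr | hr
  · have hc0 : ∀ b, c b = 0 := fun b => (sum_eq_zero_iff_of_nonneg fun b _ => hc b).1 hr.symm b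
      (mem_univ b)
    simp [hc0]
  have key : ∑ b, (c b * log (q b) - c b * log (c b / r)) ≤ ∑ b, (q b * r - c b) :=
    sum_le_sum fun b _ => mul_log_sub_mul_log_div_le (hc b) (hq b) hr (hpos b)
  rw [sum_sub_distrib, sum_sub_distrib, ← sum_mul] at key
  nlinarith

theorem sum_mul_log_div_sum {p : T → ℝ} (hp : ∀ b, 0 ≤ p b) :
    ∑ b, p b * log (p b / ∑ b', p b') =
      ∑ b, p b * log (p b) - (∑ b, p b) * log (∑ b, p b) := by
  rw [sum_mul, ← sum_sub_distrib]
  refine sum_congr rfl fun b _ => ?_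
  rcases (hp b).eq_or_lt with h | h
  · simp [← h]
  have hr : 0 < ∑ b', p b' := h.trans_le (single_le_sum (fun b _ => hp b) (mem_univ b))
  rw [log_div h.ne' hr.ne']; ring

theorem sum_mul_mul_log_div_sum (m : ℝ) (p : T → ℝ) :
    ∑ b, m * p b * log (m * p b / ∑ b', m * p b') = m * ∑ b, p b * log (p b / ∑ b', p b') := by
  rcases eq_or_ne m 0 with rfl | hm
  · simp
  simp_rw [← mul_sum, mul_div_mul_left _ _ hm, mul_sum, mul_assoc]

end LogSums

theorem elog_of_pos {a : ℝ} (h : 0 < a) : elog a = (log a : EReal) := if_neg h.not_ge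

theorem elog_of_nonpos {a : ℝ} (h : a ≤ 0) : elog a = ⊥ := if_pos h

theorem elog_mul {a b : ℝ} (ha : 0 ≤ a) (hb : 0 ≤ b) : elog (a * b) = elog a + elog b := by
  rcases ha.eq_or_lt with rfl | ha
  · simp [elog_of_nonpos]
  rcases hb.eq_or_lt with rfl | hb
  · simp [elog_of_nonpos]
  rw [elog_of_pos (mul_pos ha hb), elog_of_pos ha, elog_of_pos hb, log_mul ha.ne' hb.ne',
    EReal.coe_add]

noncomputable section MaximumLikelihood

variable {ι S T : Type*}

def IsStochastic [Fintype T] (Q : S → T → ℝ) : Prop :=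
  (∀ a b, 0 ≤ Q a b) ∧ ∀ a, ∑ b, Q a b = 1

def logLik (s : Finset ι) (g : ι → S × T) (Q : S → T → ℝ) : EReal :=
  ∑ i ∈ s, elog (Q (g i).1 (g i).2)

variable [DecidableEq S] [DecidableEq T] (s : Finset ι) (g : ι → S × T)

def transCount (a : S) (b : T) : ℝ := #{i ∈ s | g i = (a, b)}

theorem transCount_nonneg (a : S) (b : T) : 0 ≤ transCount s g a b := Nat.cast_nonneg _

theorem transCount_pos_iff {a : S} {b : T} : 0 < transCount s g a b ↔ ∃ i ∈ s, g i = (a, b) := by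
  simp [transCount, card_pos, filter_nonempty_iff]

variable [Fintype T]

-- Unvisited rows do not enter the likelihood; they only have to be probability vectors.
def empTransMat (a : S) (b : T) : ℝ :=
  if ∑ b', transCount s g a b' = 0 then (Fintype.card T : ℝ)⁻¹
  else transCount s g a b / ∑ b', transCount s g a b'

theorem isStochastic_empTransMat [Nonempty T] : IsStochastic (empTransMat s g) := by
  refine ⟨fun a b => ?_, fun a => ?_⟩ <;> unfold empTransMat <;> split_ifs with h
  · positivity
  · exact div_nonneg (transCount_nonneg s g a b) (sum_nonneg fun b _ => transCount_nonneg s g a b)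
  · simp
  · rw [← sum_div, div_self h]

variable [Fintype S]

def maxLogLik : ℝ :=
  ∑ a, ∑ b, transCount s g a b * log (transCount s g a b / ∑ b', transCount s g a b')

variable {s g}

theorem sum_eq_sum_transCount_mul (F : S → T → ℝ) :
    ∑ i ∈ s, F (g i).1 (g i).2 = ∑ a, ∑ b, transCount s g a b * F a b := by
  rw [← sum_fiberwise' s g fun u => F u.1 u.2, Fintype.sum_prod_type]
  simp [transCount]

theorem logLik_eq_coe_sum {Q : S → T → ℝ} (hQ : ∀ i ∈ s, 0 < Q (g i).1 (g i).2) :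
    logLik s g Q = ((∑ a, ∑ b, transCount s g a b * log (Q a b) : ℝ) : EReal) := by
  rw [logLik, sum_congr rfl fun i hi => elog_of_pos (hQ i hi), ← EReal.coe_finset_sum,
    sum_eq_sum_transCount_mul fun a b => log (Q a b)]

theorem logLik_le_maxLogLik {Q : S → T → ℝ} (hQ : IsStochastic Q) :
    logLik s g Q ≤ maxLogLik s g := by
  by_cases hpos : ∀ i ∈ s, 0 < Q (g i).1 (g i).2
  · rw [logLik_eq_coe_sum hpos, EReal.coe_le_coe_iff]
    refine sum_le_sum fun a _ => sum_mul_log_le_sum_mul_log_div_sum (transCount_nonneg s g a)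
      (hQ.1 a) (hQ.2 a).le fun b hab => ?_
    obtain ⟨i, hi, hgi⟩ := (transCount_pos_iff s g).1 hab
    simpa [hgi] using hpos i hi
  · push Not at hpos
    obtain ⟨i, hi, hle⟩ := hpos
    rw [logLik, ← add_sum_erase _ _ hi, elog_of_nonpos hle, EReal.bot_add]
    exact bot_le

variable (s g)

theorem logLik_empTransMat : logLik s g (empTransMat s g) = maxLogLik s g := by
  have hrow {a : S} {b : T} (hab : 0 < transCount s g a b) : 0 < ∑ b', transCount s g a b' :=
    hab.trans_le (single_le_sum (fun b _ => transCount_nonneg s g a b) (mem_univ b))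
  have hpos : ∀ i ∈ s, 0 < empTransMat s g (g i).1 (g i).2 := fun i hi => by
    have hc : 0 < transCount s g (g i).1 (g i).2 := (transCount_pos_iff s g).2 ⟨i, hi, rfl⟩
    rw [empTransMat, if_neg (hrow hc).ne']
    exact div_pos hc (hrow hc)
  rw [logLik_eq_coe_sum hpos, maxLogLik]
  congr 1
  refine sum_congr rfl fun a _ => sum_congr rfl fun b _ => ?_
  rcases (transCount_nonneg s g a b).eq_or_lt with h | h
  · simp [← h]
  · rw [empTransMat, if_neg (hrow h).ne']

theorem isGreatest_logLik [Nonempty T] :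
    IsGreatest (logLik s g '' {Q | IsStochastic Q}) (maxLogLik s g) :=
  ⟨⟨_, isStochastic_empTransMat s g, logLik_empTransMat s g⟩,
    by rintro _ ⟨Q, hQ, rfl⟩; exact logLik_le_maxLogLik hQ⟩

end MaximumLikelihood

section Samples

variable {𝒳 : Type*} (x y z : ℕ → 𝒳) (k : ℕ)

def block (w : ℕ → 𝒳) (t L : ℕ) : Blk 𝒳 L := fun i => w (t + i)

theorem block_succ (w : ℕ → 𝒳) (t L : ℕ) :
    block w t (L + 1) = Fin.snoc (block w t L) (w (t + L)) := by
  funext i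
  refine Fin.lastCases ?_ (fun j => ?_) i <;> simp [block]

def obsXZ (t : ℕ) : Hist 𝒳 k × (𝒳 × 𝒳) :=
  ((block x t k, block y t k, block z t k), (x (t + k), z (t + k)))

def obsY (t : ℕ) : (Blk 𝒳 k × Blk 𝒳 (k + 1)) × 𝒳 :=
  ((block y t k, Fin.snoc (block z t k) (z (t + k))), y (t + k))

def factorMat [Fintype 𝒳] (Q1 : Hist 𝒳 k → 𝒳 × 𝒳 → ℝ) (Q2 : Blk 𝒳 k × Blk 𝒳 (k + 1) → 𝒳 → ℝ) :
    Hist 𝒳 k → Sym 𝒳 → ℝ :=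
  fun h s => Q1 h (s.1, s.2.2) * Q2 (h.2.1, Fin.snoc h.2.2 s.2.2) s.2.1

variable {k}

theorem isTransMat_factorMat [Fintype 𝒳] {Q1 : Hist 𝒳 k → 𝒳 × 𝒳 → ℝ}
    {Q2 : Blk 𝒳 k × Blk 𝒳 (k + 1) → 𝒳 → ℝ} (hQ1 : IsStochastic Q1) (hQ2 : IsStochastic Q2) :
    IsTransMat (factorMat k Q1 Q2) := by
  refine ⟨fun h s => mul_nonneg (hQ1.1 _ _) (hQ2.1 _ _), fun h => ?_⟩
  calc ∑ s, factorMat k Q1 Q2 h s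
      = ∑ x', ∑ z', Q1 h (x', z') * ∑ y', Q2 (h.2.1, Fin.snoc h.2.2 z') y' := by
        simp only [factorMat, Fintype.sum_prod_type, mul_sum]
        exact sum_congr rfl fun _ _ => sum_comm
    _ = 1 := by simp [hQ2.2, ← Fintype.sum_prod_type', hQ1.2]

theorem loglikSeq_eq_sum_range (Q : Hist 𝒳 k → Sym 𝒳 → ℝ) (n : ℕ) :
    loglikSeq Q x y z n = ∑ t ∈ range (n - k),
      elog (Q (block x t k, block y t k, block z t k) (x (t + k), y (t + k), z (t + k))) := by
  rw [loglikSeq, sum_Ico_eq_sum_range]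
  refine sum_congr rfl fun t _ => ?_
  rw [Nat.add_sub_cancel_left, add_comm k t]
  rfl

theorem loglikSeq_eq_logLik_add_logLik [Fintype 𝒳] {Q : Hist 𝒳 k → Sym 𝒳 → ℝ}
    {Q1 : Hist 𝒳 k → 𝒳 × 𝒳 → ℝ} {Q2 : Blk 𝒳 k × Blk 𝒳 (k + 1) → 𝒳 → ℝ}
    (hQ : ∀ hx hy hz x' y' z',
      Q (hx, hy, hz) (x', y', z') = Q1 (hx, hy, hz) (x', z') * Q2 (hy, Fin.snoc hz z') y')
    (hQ1 : ∀ h p, 0 ≤ Q1 h p) (hQ2 : ∀ h y, 0 ≤ Q2 h y) (n : ℕ) :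
    loglikSeq Q x y z n =
      logLik (range (n - k)) (obsXZ x y z k) Q1 + logLik (range (n - k)) (obsY y z k) Q2 := by
  rw [loglikSeq_eq_sum_range, logLik, logLik, ← sum_add_distrib]
  exact sum_congr rfl fun t _ => by rw [hQ, elog_mul (hQ1 _ _) (hQ2 _ _)]; rfl

theorem setOf_factorized_loglikSeq_eq [Fintype 𝒳] (n : ℕ) :
    {L : EReal | ∃ Q : Hist 𝒳 k → Sym 𝒳 → ℝ, IsTransMat Q ∧ IsFactorized Q ∧
        L = loglikSeq Q x y z n} =
      logLik (range (n - k)) (obsXZ x y z k) '' {Q1 | IsStochastic Q1} +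
        logLik (range (n - k)) (obsY y z k) '' {Q2 | IsStochastic Q2} := by
  ext L
  constructor
  · rintro ⟨Q, -, ⟨Q1, Q2, hQ1, hQ1s, hQ2, hQ2s, hQ⟩, rfl⟩
    exact ⟨_, ⟨Q1, ⟨hQ1, hQ1s⟩, rfl⟩, _, ⟨Q2, ⟨hQ2, hQ2s⟩, rfl⟩,
      (loglikSeq_eq_logLik_add_logLik x y z hQ hQ1 hQ2 n).symm⟩
  · rintro ⟨_, ⟨Q1, hQ1, rfl⟩, _, ⟨Q2, hQ2, rfl⟩, rfl⟩
    exact ⟨factorMat k Q1 Q2, isTransMat_factorMat hQ1 hQ2,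
      ⟨Q1, Q2, hQ1.1, hQ1.2, hQ2.1, hQ2.2, fun _ _ _ _ _ _ => rfl⟩,
      (loglikSeq_eq_logLik_add_logLik x y z (fun _ _ _ _ _ _ => rfl) hQ1.1 hQ2.1 n).symm⟩

theorem empDistSeq_nonneg [DecidableEq 𝒳] (n : ℕ) (a b c : Blk 𝒳 (k + 1)) :
    0 ≤ empDistSeq x y z k n a b c :=
  mul_nonneg (by positivity) (sum_nonneg fun _ _ => by split_ifs <;> norm_num)

theorem natCast_mul_empDistSeq [DecidableEq 𝒳] (n : ℕ) (a b c : Blk 𝒳 (k + 1)) :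
    ((n - k : ℕ) : ℝ) * empDistSeq x y z k n a b c =
      #{t ∈ range (n - k) | block x t (k + 1) = a ∧ block y t (k + 1) = b ∧
        block z t (k + 1) = c} := by
  rcases eq_or_ne (n - k) 0 with hm | hm
  · simp [hm]
  rw [empDistSeq, ← mul_assoc, mul_inv_cancel₀ (by exact_mod_cast hm), one_mul,
    natCast_card_filter]
  simp [block, funext_iff, forall_and]

theorem transCount_obsXZ [Fintype 𝒳] [DecidableEq 𝒳] (n : ℕ) (h : Hist 𝒳 k) (q : 𝒳 × 𝒳) :
    transCount (range (n - k)) (obsXZ x y z k) h q = (n - k : ℕ) *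
      margXYkZ (empDistSeq x y z k n) (Fin.snoc h.1 q.1) h.2.1 (Fin.snoc h.2.2 q.2) := by
  rw [margXYkZ, mul_sum, transCount, card_eq_sum_card_fiberwise (f := fun t => y (t + k))
    (t := univ) fun _ _ => mem_univ _, Nat.cast_sum]
  refine sum_congr rfl fun yl _ => ?_
  rw [natCast_mul_empDistSeq, filter_filter]
  congr 2
  refine filter_congr fun t _ => ?_
  simp only [block_succ, Fin.snoc_inj, obsXZ, Prod.ext_iff]
  tauto

theorem transCount_obsY [Fintype 𝒳] [DecidableEq 𝒳] (n : ℕ) (h : Blk 𝒳 k × Blk 𝒳 (k + 1))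
    (v : 𝒳) :
    transCount (range (n - k)) (obsY y z k) h v =
      (n - k : ℕ) * margYZ (empDistSeq x y z k n) (Fin.snoc h.1 v) h.2 := by
  rw [margYZ, mul_sum, transCount, card_eq_sum_card_fiberwise (f := fun t => block x t (k + 1))
    (t := univ) fun _ _ => mem_univ _, Nat.cast_sum]
  refine sum_congr rfl fun a _ => ?_
  rw [natCast_mul_empDistSeq, filter_filter]
  congr 2
  refine filter_congr fun t _ => ?_
  simp only [block_succ, Fin.snoc_inj, obsY, Prod.ext_iff]
  tauto

end Samples

section Marginals

variable {𝒳 : Type*} {k : ℕ}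

variable (𝒳 k) in
def snocXZEquiv : Hist 𝒳 k × (𝒳 × 𝒳) ≃ Blk 𝒳 (k + 1) × Blk 𝒳 k × Blk 𝒳 (k + 1) where
  toFun u := (Fin.snoc u.1.1 u.2.1, u.1.2.1, Fin.snoc u.1.2.2 u.2.2)
  invFun w := ((Fin.init w.1, w.2.1, Fin.init w.2.2), (w.1 (Fin.last k), w.2.2 (Fin.last k)))
  left_inv u := by simp
  right_inv w := by simp

variable (𝒳 k) in
def snocYEquiv : (Blk 𝒳 k × Blk 𝒳 (k + 1)) × 𝒳 ≃ Blk 𝒳 (k + 1) × Blk 𝒳 (k + 1) where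
  toFun u := (Fin.snoc u.1.1 u.2, u.1.2)
  invFun w := ((Fin.init w.1, w.2), w.1 (Fin.last k))
  left_inv u := by simp
  right_inv w := by simp

variable [Fintype 𝒳] (p : Blk 𝒳 (k + 1) → Blk 𝒳 (k + 1) → Blk 𝒳 (k + 1) → ℝ)

theorem sum_margXYkZ_snoc (h : Hist 𝒳 k) :
    ∑ q : 𝒳 × 𝒳, margXYkZ p (Fin.snoc h.1 q.1) h.2.1 (Fin.snoc h.2.2 q.2) =
      margK p h.1 h.2.1 h.2.2 := by
  rw [Fintype.sum_prod_type]
  exact sum_congr rfl fun _ _ => sum_comm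

theorem sum_margYZ_snoc (h : Blk 𝒳 k × Blk 𝒳 (k + 1)) :
    ∑ v, margYZ p (Fin.snoc h.1 v) h.2 = margYkZ p h.1 h.2 :=
  sum_comm

theorem hent_margXYkZ :
    Hent (fun w : Blk 𝒳 (k + 1) × Blk 𝒳 k × Blk 𝒳 (k + 1) => margXYkZ p w.1 w.2.1 w.2.2) =
      -∑ h : Hist 𝒳 k, ∑ q : 𝒳 × 𝒳,
        margXYkZ p (Fin.snoc h.1 q.1) h.2.1 (Fin.snoc h.2.2 q.2) *
          log (margXYkZ p (Fin.snoc h.1 q.1) h.2.1 (Fin.snoc h.2.2 q.2)) :=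
  congrArg Neg.neg
    ((Fintype.sum_equiv (snocXZEquiv 𝒳 k) _ _ fun _ => rfl).symm.trans (Fintype.sum_prod_type _))

theorem hent_margYZ :
    Hent (fun w : Blk 𝒳 (k + 1) × Blk 𝒳 (k + 1) => margYZ p w.1 w.2) =
      -∑ h : Blk 𝒳 k × Blk 𝒳 (k + 1), ∑ v : 𝒳,
        margYZ p (Fin.snoc h.1 v) h.2 * log (margYZ p (Fin.snoc h.1 v) h.2) :=
  congrArg Neg.neg
    ((Fintype.sum_equiv (snocYEquiv 𝒳 k) _ _ fun _ => rfl).symm.trans (Fintype.sum_prod_type _))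

variable {p}

theorem margXYkZ_nonneg (hp : ∀ a b c, 0 ≤ p a b c) (a : Blk 𝒳 (k + 1)) (β : Blk 𝒳 k)
    (c : Blk 𝒳 (k + 1)) : 0 ≤ margXYkZ p a β c :=
  sum_nonneg fun _ _ => hp _ _ _

theorem margYZ_nonneg (hp : ∀ a b c, 0 ≤ p a b c) (b c : Blk 𝒳 (k + 1)) : 0 ≤ margYZ p b c :=
  sum_nonneg fun _ _ => hp _ _ _

theorem sum_margXYkZ_mul_log_div_sum (hp : ∀ a b c, 0 ≤ p a b c) :
    ∑ h : Hist 𝒳 k, ∑ q : 𝒳 × 𝒳,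
        margXYkZ p (Fin.snoc h.1 q.1) h.2.1 (Fin.snoc h.2.2 q.2) *
          log (margXYkZ p (Fin.snoc h.1 q.1) h.2.1 (Fin.snoc h.2.2 q.2) /
            ∑ q' : 𝒳 × 𝒳, margXYkZ p (Fin.snoc h.1 q'.1) h.2.1 (Fin.snoc h.2.2 q'.2)) =
      Hent (fun w : Hist 𝒳 k => margK p w.1 w.2.1 w.2.2) -
        Hent (fun w : Blk 𝒳 (k + 1) × Blk 𝒳 k × Blk 𝒳 (k + 1) => margXYkZ p w.1 w.2.1 w.2.2) := by
  rw [sum_congr rfl fun h _ => sum_mul_log_div_sum fun _ => margXYkZ_nonneg hp _ _ _,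
    sum_sub_distrib, hent_margXYkZ]
  simp only [sum_margXYkZ_snoc, Hent]
  ring

theorem sum_margYZ_mul_log_div_sum (hp : ∀ a b c, 0 ≤ p a b c) :
    ∑ h : Blk 𝒳 k × Blk 𝒳 (k + 1), ∑ v : 𝒳,
        margYZ p (Fin.snoc h.1 v) h.2 *
          log (margYZ p (Fin.snoc h.1 v) h.2 / ∑ v', margYZ p (Fin.snoc h.1 v') h.2) =
      Hent (fun w : Blk 𝒳 k × Blk 𝒳 (k + 1) => margYkZ p w.1 w.2) -
        Hent (fun w : Blk 𝒳 (k + 1) × Blk 𝒳 (k + 1) => margYZ p w.1 w.2) := by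
  rw [sum_congr rfl fun h _ => sum_mul_log_div_sum fun _ => margYZ_nonneg hp _ _,
    sum_sub_distrib, hent_margYZ]
  simp only [sum_margYZ_snoc, Hent]
  ring

end Marginals

section EmpiricalMaximum

variable {𝒳 : Type*} [Fintype 𝒳] [DecidableEq 𝒳] (x y z : ℕ → 𝒳) (k n : ℕ)

theorem maxLogLik_obsXZ :
    maxLogLik (range (n - k)) (obsXZ x y z k) = (n - k : ℕ) *
      (Hent (fun w : Hist 𝒳 k => margK (empDistSeq x y z k n) w.1 w.2.1 w.2.2) -
        Hent (fun w : Blk 𝒳 (k + 1) × Blk 𝒳 k × Blk 𝒳 (k + 1) =>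
          margXYkZ (empDistSeq x y z k n) w.1 w.2.1 w.2.2)) := by
  simp only [maxLogLik, transCount_obsXZ]
  simp only [sum_mul_mul_log_div_sum]
  rw [← mul_sum, sum_margXYkZ_mul_log_div_sum (empDistSeq_nonneg x y z n)]

theorem maxLogLik_obsY :
    maxLogLik (range (n - k)) (obsY y z k) = (n - k : ℕ) *
      (Hent (fun w : Blk 𝒳 k × Blk 𝒳 (k + 1) => margYkZ (empDistSeq x y z k n) w.1 w.2) -
        Hent (fun w : Blk 𝒳 (k + 1) × Blk 𝒳 (k + 1) => margYZ (empDistSeq x y z k n) w.1 w.2)) := by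
  simp only [maxLogLik, transCount_obsY x]
  simp only [sum_mul_mul_log_div_sum]
  rw [← mul_sum, sum_margYZ_mul_log_div_sum (empDistSeq_nonneg x y z n)]

end EmpiricalMaximum

theorem max_loglik_factorized_eq_entropy_expr_general
    {𝒳 : Type*} [Fintype 𝒳] [DecidableEq 𝒳] [Nonempty 𝒳]
    (x y z : ℕ → 𝒳) (k n : ℕ) :
    IsGreatest
      {L : EReal | ∃ Q : Hist 𝒳 k → Sym 𝒳 → ℝ, IsTransMat Q ∧ IsFactorized Q ∧
        L = loglikSeq Q x y z n}
      (((((n - k : ℕ) : ℝ) *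
        (Hent (fun w : Blk 𝒳 k × Blk 𝒳 k × Blk 𝒳 k =>
            margK (empDistSeq x y z k n) w.1 w.2.1 w.2.2) -
          Hent (fun w : Blk 𝒳 (k+1) × Blk 𝒳 k × Blk 𝒳 (k+1) =>
            margXYkZ (empDistSeq x y z k n) w.1 w.2.1 w.2.2) +
          Hent (fun w : Blk 𝒳 k × Blk 𝒳 (k+1) =>
            margYkZ (empDistSeq x y z k n) w.1 w.2) -
          Hent (fun w : Blk 𝒳 (k+1) × Blk 𝒳 (k+1) =>
            margYZ (empDistSeq x y z k n) w.1 w.2))) : ℝ) : EReal) := by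
  have h := (isGreatest_logLik (range (n - k)) (obsXZ x y z k)).add
    (isGreatest_logLik (range (n - k)) (obsY y z k))
  rw [maxLogLik_obsXZ, maxLogLik_obsY x, ← EReal.coe_add] at h
  rw [setOf_factorized_loglikSeq_eq]
  convert h using 2
  ring

/-- For any samples with `n > k`, the maximum of the log-likelihood over
all factorized transition probability matrices is attained and equals
`(n−k)·[Ĥ(X₁ᵏ,Y₁ᵏ,Z₁ᵏ) − Ĥ(X₁ᵏ⁺¹,Y₁ᵏ,Z₁ᵏ⁺¹) + Ĥ(Y₁ᵏ,Z₁ᵏ⁺¹) − Ĥ(Y₁ᵏ⁺¹,Z₁ᵏ⁺¹)]`,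
entropies of marginals of the empirical `(k+1)`-block distribution. -/
theorem max_loglik_factorized_eq_entropy_expr
    {𝒳 : Type*} [Fintype 𝒳] [DecidableEq 𝒳] [Nonempty 𝒳]
    (x y z : ℕ → 𝒳) (k n : ℕ) (hn : k < n) :
    IsGreatest
      {L : EReal | ∃ Q : Hist 𝒳 k → Sym 𝒳 → ℝ, IsTransMat Q ∧ IsFactorized Q ∧
        L = loglikSeq Q x y z n}
      (((((n - k : ℕ) : ℝ) *
        (Hent (fun w : Blk 𝒳 k × Blk 𝒳 k × Blk 𝒳 k =>
            margK (empDistSeq x y z k n) w.1 w.2.1 w.2.2) -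
          Hent (fun w : Blk 𝒳 (k+1) × Blk 𝒳 k × Blk 𝒳 (k+1) =>
            margXYkZ (empDistSeq x y z k n) w.1 w.2.1 w.2.2) +
          Hent (fun w : Blk 𝒳 k × Blk 𝒳 (k+1) =>
            margYkZ (empDistSeq x y z k n) w.1 w.2) -
          Hent (fun w : Blk 𝒳 (k+1) × Blk 𝒳 (k+1) =>
            margYZ (empDistSeq x y z k n) w.1 w.2))) : ℝ) : EReal) :=
  max_loglik_factorized_eq_entropy_expr_general x y z k n

end DIG
end

section
/- At every parameter point (γ, γ′) for which all entries of the stochastic matrices Q1_γ and Q2_{γ′} are strictly positive, the Jacobian matrix K(φ) of the product parametrization h(γ,γ′) — whose (u, f) entry is the partial derivative of the transition probability Q_{h(γ,γ′)}(u′_x,u′_y,u′_z | u_{x,1}^k,u_{y,1}^k,u_{z,1}^k) with respect to the f-th free parameter of (γ, γ′) — has full column rank d + d′, where d = |𝒳|^{3k}(|𝒳|²−1) and d′ = |𝒳|^{2k+1}(|𝒳|−1). -/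
open MeasureTheory Filter Finset
open scoped BigOperators Topology ENNReal NNReal Classical

namespace DIG

variable {𝒳 : Type*} [Fintype 𝒳] [DecidableEq 𝒳] [Nonempty 𝒳]

/-- Free-parameter index set for `Q1`: pairs `(x',z')` except the distinguished `(e,e)`. -/
abbrev PairIdx (𝒳 : Type*) (e : 𝒳) := {p : 𝒳 × 𝒳 // p ≠ (e, e)}

/-- Free-parameter index set for `Q2`: symbols except the distinguished `e`. -/
abbrev SymIdx (𝒳 : Type*) (e : 𝒳) := {y : 𝒳 // y ≠ e}

/-- The stochastic matrix `Q1_γ`, filled in from its free parameters `γ`: the entry at the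
distinguished column `(e,e)` is `1` minus the sum of the free entries of its row. -/
noncomputable def Q1full {k : ℕ} (e : 𝒳) (γ : Hist 𝒳 k → PairIdx 𝒳 e → ℝ)
    (h : Hist 𝒳 k) (p : 𝒳 × 𝒳) : ℝ :=
  if hp : p = (e, e) then 1 - ∑ p' : PairIdx 𝒳 e, γ h p' else γ h ⟨p, hp⟩

/-- The stochastic matrix `Q2_{γ′}`, filled in from its free parameters `γ′`. -/
noncomputable def Q2full {k : ℕ} (e : 𝒳) (γ' : Blk 𝒳 k × Blk 𝒳 (k+1) → SymIdx 𝒳 e → ℝ)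
    (h : Blk 𝒳 k × Blk 𝒳 (k+1)) (y : 𝒳) : ℝ :=
  if hy : y = e then 1 - ∑ y' : SymIdx 𝒳 e, γ' h y' else γ' h ⟨y, hy⟩

/-- The product parametrization `h(γ,γ′)`:
`Q(x',y',z' | hx,hy,hz) = Q1_γ(x',z' | hx,hy,hz) · Q2_{γ′}(y' | hy,(hz,z'))`. -/
noncomputable def hParam (k : ℕ) (e : 𝒳)
    (gg : (Hist 𝒳 k → PairIdx 𝒳 e → ℝ) × (Blk 𝒳 k × Blk 𝒳 (k+1) → SymIdx 𝒳 e → ℝ)) :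
    Hist 𝒳 k → Sym 𝒳 → ℝ :=
  fun h s => Q1full e gg.1 h (s.1, s.2.2) * Q2full e gg.2 (h.2.1, Fin.snoc h.2.2 s.2.2) s.2.1

/-!
At a point where all entries of `Q1_γ` are positive, a tangent vector `(δ, δ')` killed by the
derivative satisfies `Q1 · dQ2 + Q2 · dQ1 = 0` entrywise. Summing over `y'` and using that rows of
`Q2` sum to `1` while rows of `dQ2` sum to `0` gives `dQ1 = 0`, hence `Q1 · dQ2 = 0` and `dQ2 = 0`.
Since a stochastic row is recovered from its free entries, `δ = 0` and `δ' = 0`.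
-/

end DIG

namespace DIG

section FillRow

variable {ι : Type*} [Fintype ι] [DecidableEq ι]

noncomputable def fillRow (e : ι) (v : {i // i ≠ e} → ℝ) : ι → ℝ :=
  fun i => if hi : i = e then 1 - ∑ j, v j else v ⟨i, hi⟩

noncomputable def fillRowLinear (e : ι) : ({i // i ≠ e} → ℝ) →L[ℝ] ι → ℝ :=
  ContinuousLinearMap.pi fun i =>
    if hi : i = e then -∑ j, ContinuousLinearMap.proj j else ContinuousLinearMap.proj ⟨i, hi⟩

theorem fillRowLinear_apply (e : ι) (v : {i // i ≠ e} → ℝ) (i : ι) :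
    fillRowLinear e v i = if hi : i = e then -∑ j, v j else v ⟨i, hi⟩ := by
  by_cases hi : i = e <;> simp [fillRowLinear, hi]

theorem fillRowLinear_apply_coe (e : ι) (v : {i // i ≠ e} → ℝ) (j : {i // i ≠ e}) :
    fillRowLinear e v j = v j := by
  simp [fillRowLinear_apply, j.prop]

theorem fillRowLinear_injective (e : ι) : Function.Injective (fillRowLinear e) := by
  intro v w hvw
  funext j
  rw [← fillRowLinear_apply_coe e v j, ← fillRowLinear_apply_coe e w j, hvw]

theorem sum_fillRowLinear (e : ι) (v : {i // i ≠ e} → ℝ) : ∑ i, fillRowLinear e v i = 0 := by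
  rw [Fintype.sum_eq_add_sum_subtype_ne _ e, fillRowLinear_apply]
  simp only [fillRowLinear_apply_coe]
  simp

theorem fillRow_eq_add (e : ι) (v : {i // i ≠ e} → ℝ) :
    fillRow e v = Pi.single e 1 + fillRowLinear e v := by
  funext i
  by_cases hi : i = e
  · subst hi
    simp [fillRow, fillRowLinear_apply, sub_eq_add_neg]
  · simp [fillRow, fillRowLinear_apply, hi]

theorem sum_fillRow (e : ι) (v : {i // i ≠ e} → ℝ) : ∑ i, fillRow e v i = 1 := by
  simp [fillRow_eq_add, Finset.sum_add_distrib, sum_fillRowLinear]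

theorem hasFDerivAt_fillRow_apply (e i : ι) (v : {i // i ≠ e} → ℝ) :
    HasFDerivAt (fun w => fillRow e w i) (ContinuousLinearMap.proj i ∘L fillRowLinear e) v := by
  simp only [fillRow_eq_add, Pi.add_apply]
  exact (ContinuousLinearMap.proj i ∘L fillRowLinear e).hasFDerivAt.const_add _

end FillRow

variable {𝒳 : Type*} [Fintype 𝒳] [DecidableEq 𝒳]

abbrev ParamSpace (𝒳 : Type*) [Fintype 𝒳] [DecidableEq 𝒳] (k : ℕ) (e : 𝒳) : Type _ :=
  (Hist 𝒳 k → PairIdx 𝒳 e → ℝ) × (Blk 𝒳 k × Blk 𝒳 (k+1) → SymIdx 𝒳 e → ℝ)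

open ContinuousLinearMap in
theorem fderiv_hParam_apply (k : ℕ) (e : 𝒳)
    (γ δ : Hist 𝒳 k → PairIdx 𝒳 e → ℝ) (γ' δ' : Blk 𝒳 k × Blk 𝒳 (k+1) → SymIdx 𝒳 e → ℝ)
    (h : Hist 𝒳 k) (s : Sym 𝒳) :
    fderiv ℝ (hParam k e) (γ, γ') (δ, δ') h s =
      Q1full e γ h (s.1, s.2.2) * fillRowLinear e (δ' (h.2.1, Fin.snoc h.2.2 s.2.2)) s.2.1 +
        Q2full e γ' (h.2.1, Fin.snoc h.2.2 s.2.2) s.2.1 *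
          fillRowLinear (e, e) (δ h) (s.1, s.2.2) := by
  -- `Q1full e γ h` and `Q2full e γ' c` are definitionally `fillRow (e, e) (γ h)` and
  -- `fillRow e (γ' c)`.
  have hQ1 (h : Hist 𝒳 k) (p : 𝒳 × 𝒳) :
      HasFDerivAt (fun gg : ParamSpace 𝒳 k e => Q1full e gg.1 h p)
        (proj p ∘L fillRowLinear (e, e) ∘L proj h ∘L fst ℝ _ _) (γ, γ') := by
    exact (hasFDerivAt_fillRow_apply (e, e) p (γ h)).comp (γ, γ') (proj h ∘L fst ℝ _ _).hasFDerivAt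
  have hQ2 (c : Blk 𝒳 k × Blk 𝒳 (k+1)) (y : 𝒳) :
      HasFDerivAt (fun gg : ParamSpace 𝒳 k e => Q2full e gg.2 c y)
        (proj y ∘L fillRowLinear e ∘L proj c ∘L snd ℝ _ _) (γ, γ') := by
    exact (hasFDerivAt_fillRow_apply e y (γ' c)).comp (γ, γ') (proj c ∘L snd ℝ _ _).hasFDerivAt
  rw [(hasFDerivAt_pi.2 fun h => hasFDerivAt_pi.2 fun s => (hQ1 h _).mul (hQ2 _ _)).fderiv]
  simp

theorem eq_zero_of_forall_mul_add_mul_eq_zero {Y : Type*} [Fintype Y] {a b : ℝ} {q d : Y → ℝ}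
    (hq : ∑ y, q y = 1) (hd : ∑ y, d y = 0) (ha : a ≠ 0) (h : ∀ y, a * d y + q y * b = 0) :
    b = 0 ∧ d = 0 := by
  have hb : b = 0 := by
    simpa [Finset.sum_add_distrib, ← Finset.mul_sum, ← Finset.sum_mul, hq, hd] using
      Finset.sum_eq_zero (s := Finset.univ) fun y _ => h y
  refine ⟨hb, funext fun y => ?_⟩
  simpa [hb, ha] using h y

theorem finrank_fun_fun (α β : Type*) [Fintype α] [Fintype β] :
    Module.finrank ℝ (α → β → ℝ) = Fintype.card α * Fintype.card β := by
  simp [Module.finrank_pi_fintype]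

end DIG

namespace DIG

variable {𝒳 : Type*} [Fintype 𝒳] [DecidableEq 𝒳] [Nonempty 𝒳]

theorem jacobian_full_column_rank_general (k : ℕ) (e : 𝒳)
    (γ : Hist 𝒳 k → PairIdx 𝒳 e → ℝ) (γ' : Blk 𝒳 k × Blk 𝒳 (k+1) → SymIdx 𝒳 e → ℝ)
    (hpos1 : ∀ h p, 0 < Q1full e γ h p) :
    Function.Injective (fderiv ℝ (hParam k e (𝒳 := 𝒳)) (γ, γ')) ∧
    Module.finrank ℝ
        ((Hist 𝒳 k → PairIdx 𝒳 e → ℝ) × (Blk 𝒳 k × Blk 𝒳 (k+1) → SymIdx 𝒳 e → ℝ))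
      = Fintype.card 𝒳 ^ (3 * k) * (Fintype.card 𝒳 ^ 2 - 1)
        + Fintype.card 𝒳 ^ (2 * k + 1) * (Fintype.card 𝒳 - 1) := by
  refine ⟨(injective_iff_map_eq_zero _).2 fun ⟨δ, δ'⟩ hD => ?_, ?_⟩
  · have hrow (h : Hist 𝒳 k) (p : 𝒳 × 𝒳) : fillRowLinear (e, e) (δ h) p = 0 ∧
        fillRowLinear e (δ' (h.2.1, Fin.snoc h.2.2 p.2)) = 0 :=
      eq_zero_of_forall_mul_add_mul_eq_zero (q := Q2full e γ' (h.2.1, Fin.snoc h.2.2 p.2))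
        (sum_fillRow e _) (sum_fillRowLinear e _) (hpos1 h p).ne' fun y => by
          simpa [fderiv_hParam_apply] using congrFun (congrFun hD h) (p.1, y, p.2)
    have hδ : δ = 0 := funext fun h =>
      (map_eq_zero_iff _ (fillRowLinear_injective _)).1 (funext fun p => (hrow h p).1)
    have hδ' : δ' = 0 := funext fun ⟨β, c⟩ => by
      have := (hrow (β, β, Fin.init c) (e, c (Fin.last k))).2
      rw [Fin.snoc_init_self] at this
      exact (map_eq_zero_iff _ (fillRowLinear_injective _)).1 this
    exact Prod.ext hδ hδ'
  · rw [Module.finrank_prod, finrank_fun_fun, finrank_fun_fun]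
    simp only [Fintype.card_prod, Fintype.card_fun, Fintype.card_fin, Fintype.card_subtype_compl,
      Fintype.card_unique]
    rw [← sq (Fintype.card 𝒳)]
    ring

/-- At every parameter point with strictly positive entries of `Q1_γ` and
`Q2_{γ′}`, the Jacobian of the product parametrization has full column rank `d + d′`:
the derivative is injective, and the parameter space has dimension
`d + d′ = |𝒳|^{3k}(|𝒳|²−1) + |𝒳|^{2k+1}(|𝒳|−1)`. -/
theorem jacobian_full_column_rank (k : ℕ) (e : 𝒳)
    (γ : Hist 𝒳 k → PairIdx 𝒳 e → ℝ) (γ' : Blk 𝒳 k × Blk 𝒳 (k+1) → SymIdx 𝒳 e → ℝ)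
    (hpos1 : ∀ h p, 0 < Q1full e γ h p) (hpos2 : ∀ h y, 0 < Q2full e γ' h y) :
    Function.Injective (fderiv ℝ (hParam k e (𝒳 := 𝒳)) (γ, γ')) ∧
    Module.finrank ℝ
        ((Hist 𝒳 k → PairIdx 𝒳 e → ℝ) × (Blk 𝒳 k × Blk 𝒳 (k+1) → SymIdx 𝒳 e → ℝ))
      = Fintype.card 𝒳 ^ (3 * k) * (Fintype.card 𝒳 ^ 2 - 1)
        + Fintype.card 𝒳 ^ (2 * k + 1) * (Fintype.card 𝒳 - 1) :=
  jacobian_full_column_rank_general k e γ γ' hpos1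

end DIG
end
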